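/- Suppose H is a bialgebra, φ: Rio → H is an algebra morphism, and {Λ_k}_{k∈Z≥1} is a family of 1-cocycles on H. Let Φ(x) = φ(Π(x)) (coefficientwise) and suppose φ(Y(x)) = F(x), where F(x) ∈ H[[x]] is the unique solution of F(x) = 1 + Σ_{k≥1} Λ_k(F(x)Φ(x)^k) (well-defined since Φ(x) has zero constant term, so only terms with k ≤ n contribute to the coefficient of x^n). Then for every n ≥ 0: if φ is a bialgebra morphism when restricted to FdB^{(n)}, then φ is also a bialgebra morphism when restricted to Rio^{(n)}. -/

import Mathlib

open scoped TensorProduct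

namespace CK

/-! ### Decorated rooted trees, represented by finite prefix-closed sets of addresses.

A vertex is an address `v : List ℕ` (the root is `[]`, children of `v` are `v ++ [n]`).
The partial order of the tree: `u ≤ v` iff `v` is a prefix of `u` (the root is the maximum).
`vdec v` is the decoration of the vertex `v`, and `edec v` is the decoration of the edge
joining a non-root vertex `v` to its parent, recorded together with the decoration of the
parent (an element of `Σ i, E i`). -/
structure PreTree (I : Type) (E : I → Type) : Type where
  supp : Finset (List ℕ)
  vdec : List ℕ → I
  edec : List ℕ → Option (Σ i : I, E i)

variable {I : Type} {E : I → Type}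

/-- Well-formedness: the root address belongs to the tree, the support is closed under
prefixes, and the decoration of the edge from `u` to its child `u ++ [n]` is of the form
`⟨vdec u, e⟩` with `e : E (vdec u)`. -/
def PreTree.WF (t : PreTree I E) : Prop :=
  ([] ∈ t.supp) ∧
  (∀ v ∈ t.supp, ∀ w : List ℕ, w <+: v → w ∈ t.supp) ∧
  (∀ (u : List ℕ) (n : ℕ), u ++ [n] ∈ t.supp →
    ∃ e : E (t.vdec u), t.edec (u ++ [n]) = some ⟨t.vdec u, e⟩)

/-- Isomorphism of decorated rooted trees: a bijection of the vertex sets preserving the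
root, the tree structure and the decorations of vertices and edges. -/
def PreTree.Iso (t s : PreTree I E) : Prop :=
  ∃ f : List ℕ → List ℕ,
    Set.BijOn f ↑t.supp ↑s.supp ∧ f [] = [] ∧
    (∀ (u : List ℕ) (n : ℕ), u ++ [n] ∈ t.supp → ∃ m : ℕ, f (u ++ [n]) = f u ++ [m]) ∧
    (∀ v ∈ t.supp, s.vdec (f v) = t.vdec v) ∧
    (∀ v ∈ t.supp, v ≠ [] → s.edec (f v) = t.edec v)

/-- Well-formed decorated rooted trees. -/
def WFTree (I : Type) (E : I → Type) : Type := {t : PreTree I E // t.WF}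

/-- Isomorphism classes of (well-formed) decorated rooted trees. -/
def TreeCl (I : Type) (E : I → Type) : Type := Quot fun a b : WFTree I E => a.1.Iso b.1

/-- Isomorphism classes of decorated rooted forests: multisets of tree classes. -/
def Forest (I : Type) (E : I → Type) : Type := Multiset (TreeCl I E)

instance : AddCancelCommMonoid (Forest I E) := inferInstanceAs (AddCancelCommMonoid (Multiset (TreeCl I E)))
instance : DecidableEq (List ℕ) := inferInstance

/-- The class of a well-formed tree. -/
def toCl (t : PreTree I E) (h : t.WF) : TreeCl I E := Quot.mk _ ⟨t, h⟩

/-- A representative of an isomorphism class of trees. -/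
noncomputable def rep (c : TreeCl I E) : PreTree I E := (Quot.out c).1

theorem rep_wf (c : TreeCl I E) : (rep c).WF := (Quot.out c).2

/-- The decoration of the root of (a representative of) a tree class. -/
noncomputable def rootDec (c : TreeCl I E) : I := (rep c).vdec []

/-- The children of a vertex `v` in a tree. -/
def childrenAt (t : PreTree I E) (v : List ℕ) : Finset (List ℕ) :=
  t.supp.filter fun c => c ≠ [] ∧ c.dropLast = v

/-- Total weight of a tree with respect to a weight function on the vertex decorations. -/
def wtPre (w : I → ℕ) (t : PreTree I E) : ℕ := ∑ v ∈ t.supp, w (t.vdec v)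

noncomputable def wtCl (w : I → ℕ) (c : TreeCl I E) : ℕ := wtPre w (rep c)

/-- The automorphisms of a decorated rooted tree: bijections of the vertex set fixing the
root, preserving the covering relation (children map to children) and all decorations. -/
def AutSet (t : PreTree I E) : Set ({v // v ∈ t.supp} ≃ {v // v ∈ t.supp}) :=
  {g | (∀ h : ([] : List ℕ) ∈ t.supp, (g ⟨[], h⟩).1 = []) ∧
    (∀ (u : List ℕ) (n : ℕ) (hu : u ∈ t.supp) (h : u ++ [n] ∈ t.supp),
      ∃ m : ℕ, (g ⟨u ++ [n], h⟩).1 = (g ⟨u, hu⟩).1 ++ [m]) ∧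
    (∀ (v : List ℕ) (h : v ∈ t.supp), t.vdec (g ⟨v, h⟩).1 = t.vdec v) ∧
    (∀ (v : List ℕ) (h : v ∈ t.supp), v ≠ [] → t.edec (g ⟨v, h⟩).1 = t.edec v)}

/-- The order of the automorphism group of a decorated rooted tree. -/
noncomputable def autCard (t : PreTree I E) : ℕ := (AutSet t).ncard

noncomputable def autCardCl (c : TreeCl I E) : ℕ := autCard (rep c)

end CK
namespace CK

variable {I : Type} {E : I → Type}

/-- Grafting at the level of raw trees: given a root decoration `i` and a list of pairs
(edge decoration, tree), form the tree whose root is decorated `i` and whose `j`-th root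
edge carries the `j`-th edge decoration and leads to the `j`-th tree. -/
def graftPre (i : I) (l : List (E i × PreTree I E)) : PreTree I E where
  supp := insert [] ((Finset.range l.length).biUnion fun j =>
    ((l[j]?.elim ∅ fun p => p.2.supp).image fun v => j :: v))
  vdec v :=
    match v with
    | [] => i
    | j :: v' => (l[j]?.elim i fun p => p.2.vdec v')
  edec v :=
    match v with
    | [] => none
    | j :: v' => (l[j]?.elim none fun p =>
        if v' = [] then some ⟨i, p.1⟩ else p.2.edec v')

theorem mem_graftPre_supp (i : I) (l : List (E i × PreTree I E)) (v : List ℕ) :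
    v ∈ (graftPre i l).supp ↔
      v = [] ∨ ∃ j : ℕ, j < l.length ∧ ∃ v' : List ℕ,
        v = j :: v' ∧ v' ∈ (l[j]?.elim ∅ fun p => p.2.supp) := by
  simp only [graftPre, Finset.mem_insert, Finset.mem_biUnion, Finset.mem_range,
    Finset.mem_image]
  constructor
  · rintro (h | ⟨j, hj, v', hv', rfl⟩)
    · exact Or.inl h
    · exact Or.inr ⟨j, hj, v', rfl, hv'⟩
  · rintro (h | ⟨j, hj, v', rfl, hv'⟩)
    · exact Or.inl h
    · exact Or.inr ⟨j, hj, v', hv', rfl⟩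

theorem graftPre_wf (i : I) (l : List (E i × PreTree I E))
    (hl : ∀ p ∈ l, p.2.WF) : (graftPre i l).WF := by
  refine ⟨Finset.mem_insert_self _ _, ?_, ?_⟩
  · intro v hv w hw
    rw [mem_graftPre_supp] at hv ⊢
    rcases hv with rfl | ⟨j, hj, v', rfl, hv'⟩
    · left; exact List.prefix_nil.mp hw
    · rcases w with _ | ⟨a, w'⟩
      · exact Or.inl rfl
      · rw [List.cons_prefix_cons] at hw
        obtain ⟨rfl, hw'⟩ := hw
        right
        refine ⟨a, hj, w', rfl, ?_⟩
        have hget : l[a]? = some l[a] := List.getElem?_eq_getElem hj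
        simp only [hget, Option.elim_some] at hv' ⊢
        exact (hl _ (List.getElem_mem hj)).2.1 v' hv' w' hw'
  · intro u n hun
    rw [mem_graftPre_supp] at hun
    rcases hun with h | ⟨j, hj, v', hv, hv'⟩
    · simp at h
    · have hget : l[j]? = some l[j] := List.getElem?_eq_getElem hj
      simp only [hget, Option.elim_some] at hv'
      rcases u with _ | ⟨a, u'⟩
      · simp only [List.nil_append] at hv
        obtain ⟨rfl, rfl⟩ := List.cons.inj hv
        exact ⟨l[n].1, by simp [graftPre, hget]⟩
      · have hv2 : a :: (u' ++ [n]) = j :: v' := by simpa using hv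
        obtain ⟨rfl, rfl⟩ := List.cons.inj hv2
        obtain ⟨e, he⟩ := (hl _ (List.getElem_mem hj)).2.2 u' n hv'
        have hvd : (graftPre i l).vdec (a :: u') = l[a].2.vdec u' := by
          simp [graftPre, hget]
        have hed : (graftPre i l).edec ((a :: u') ++ [n]) = l[a].2.edec (u' ++ [n]) := by
          simp only [List.cons_append]
          simp [graftPre, hget]
        rw [hvd, hed]
        exact ⟨e, he⟩

end CK
namespace CK

variable {I : Type} {E : I → Type}

theorem graftList_wf (i : I) [Fintype (E i)] (fv : E i → Forest I E) :
    ∀ p ∈ ((Finset.univ : Finset (E i)).toList.flatMap fun e =>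
      (fv e).toList.map fun c => (e, rep c)), p.2.WF := by
  intro p hp
  simp only [List.mem_flatMap, List.mem_map] at hp
  obtain ⟨e, -, c, -, rfl⟩ := hp
  exact rep_wf c

/-- Grafting at the level of isomorphism classes: `graftF i fv` is (the class of) the tree
obtained from the disjoint union of the forests `fv e`, `e : E i`, by adjoining a new root
decorated `i`, joined to the root of every component of `fv e` by an edge decorated `e`. -/
noncomputable def graftF (i : I) [Fintype (E i)] (fv : E i → Forest I E) : TreeCl I E :=
  toCl (graftPre i ((Finset.univ : Finset (E i)).toList.flatMap fun e =>
      (fv e).toList.map fun c => (e, rep c)))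
    (graftPre_wf _ _ (graftList_wf i fv))

/-- The subtree (principal downset) of `t` rooted at the vertex `r`, with addresses
relative to `r`. -/
def subPre (t : PreTree I E) (r : List ℕ) : PreTree I E where
  supp := insert [] ((t.supp.filter fun v => r <+: v).image fun v => v.drop r.length)
  vdec v := t.vdec (r ++ v)
  edec v := if v = [] then none else t.edec (r ++ v)

theorem subPre_wf (t : PreTree I E) (ht : t.WF) (r : List ℕ) : (subPre t r).WF := by
  refine ⟨Finset.mem_insert_self _ _, ?_, ?_⟩
  · intro v hv w hw
    simp only [subPre, Finset.mem_insert, Finset.mem_image, Finset.mem_filter] at hv ⊢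
    rcases hv with rfl | ⟨v0, ⟨hv0, hr⟩, rfl⟩
    · left; exact List.prefix_nil.mp hw
    · right
      refine ⟨r ++ w, ⟨?_, List.prefix_append _ _⟩, by simp⟩
      obtain ⟨v1, rfl⟩ := hr
      simp only [List.drop_left] at hw
      exact ht.2.1 _ hv0 _ ((List.prefix_append_right_inj r).mpr hw)
  · intro u n hun
    simp only [subPre, Finset.mem_insert, Finset.mem_image, Finset.mem_filter] at hun
    rcases hun with h | ⟨v0, ⟨hv0, hr⟩, hdrop⟩
    · simp at h
    · obtain ⟨v1, rfl⟩ := hr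
      simp only [List.drop_left] at hdrop
      subst hdrop
      obtain ⟨e, he⟩ := ht.2.2 (r ++ u) n (by rw [← List.append_assoc] at hv0; exact hv0)
      refine ⟨e, ?_⟩
      show (if u ++ [n] = [] then none else t.edec (r ++ (u ++ [n]))) = _
      rw [if_neg (by simp), ← List.append_assoc]
      exact he

noncomputable def subCl (t : PreTree I E) (ht : t.WF) (r : List ℕ) : TreeCl I E :=
  toCl (subPre t r) (subPre_wf t ht r)

/-- `D` is a nonempty-complement downset of the tree `t`:
a subset of the vertices closed under passing to descendants, not containing the root. -/
def IsCut (t : PreTree I E) (D : Finset (List ℕ)) : Prop :=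
  D ⊆ t.supp ∧ ∀ v ∈ D, ∀ w ∈ t.supp, v <+: w → w ∈ D

/-- Remove a downset from a tree. -/
def complPre (t : PreTree I E) (D : Finset (List ℕ)) : PreTree I E where
  supp := insert [] (t.supp \ D)
  vdec := t.vdec
  edec v := if v = [] then none else t.edec v

theorem complPre_wf (t : PreTree I E) (ht : t.WF) (D : Finset (List ℕ))
    (hD : ∀ v ∈ D, ∀ w ∈ t.supp, v <+: w → w ∈ D) : (complPre t D).WF := by
  refine ⟨Finset.mem_insert_self _ _, ?_, ?_⟩
  · intro v hv w hw
    simp only [complPre, Finset.mem_insert, Finset.mem_sdiff] at hv ⊢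
    rcases hv with rfl | ⟨hv1, hv2⟩
    · left; exact List.prefix_nil.mp hw
    · rcases eq_or_ne w [] with rfl | hne
      · exact Or.inl rfl
      · right
        refine ⟨ht.2.1 v hv1 w hw, fun hwD => hv2 (hD w hwD v hv1 hw)⟩
  · intro u n hun
    simp only [complPre, Finset.mem_insert, Finset.mem_sdiff] at hun
    rcases hun with h | ⟨h1, h2⟩
    · simp at h
    · obtain ⟨e, he⟩ := ht.2.2 u n h1
      refine ⟨e, ?_⟩
      show (if u ++ [n] = [] then none else t.edec (u ++ [n])) = _
      rw [if_neg (by simp)]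
      exact he

noncomputable def complCl (t : PreTree I E) (ht : t.WF) (D : Finset (List ℕ))
    (hD : ∀ v ∈ D, ∀ w ∈ t.supp, v <+: w → w ∈ D) : TreeCl I E :=
  toCl (complPre t D) (complPre_wf t ht D hD)

/-- The forest induced by a downset `D` of a tree: one subtree for each minimal
element of `D`. -/
noncomputable def downForest (t : PreTree I E) (ht : t.WF) (D : Finset (List ℕ)) :
    Forest I E :=
  ((D.filter fun r => r = [] ∨ r.dropLast ∉ D).val.map fun r => subCl t ht r)

instance : Singleton (TreeCl I E) (Forest I E) :=
  inferInstanceAs (Singleton (TreeCl I E) (Multiset (TreeCl I E)))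

/-- All terms `(D, t ∖ D)` of the coproduct of a tree class `c`: `D` runs over the
downsets of (a representative of) `c`; the first component is the forest induced by `D`
and the second the complementary forest. -/
noncomputable def cutsTree (c : TreeCl I E) : Multiset (Forest I E × Forest I E) :=
  ((rep c).supp.powerset.val.map fun D =>
    if hD : ∀ v ∈ D, ∀ w ∈ (rep c).supp, v <+: w → w ∈ D then
      ({(downForest (rep c) (rep_wf c) D,
         if ([] : List ℕ) ∈ D then 0 else {complCl (rep c) (rep_wf c) D hD})} :
        Multiset (Forest I E × Forest I E))
    else 0).sum

/-- All terms of the coproduct of a forest: products of cuts of the component trees. -/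
noncomputable def cutsForest (f : Forest I E) : Multiset (Forest I E × Forest I E) :=
  f.toList.foldr (fun c acc =>
    (cutsTree c).bind fun p => acc.map fun q => (p.1 + q.1, p.2 + q.2)) {(0, 0)}

end CK
namespace CK

open scoped TensorProduct

variable (K : Type) [Field K] [CharZero K]
variable {I : Type} {E : I → Type}

/-- The decorated Connes–Kreimer Hopf algebra: the free vector space on isomorphism
classes of decorated forests, with disjoint union of forests as multiplication. -/
abbrev HCK (I : Type) (E : I → Type) : Type := AddMonoidAlgebra K (Forest I E)

/-- The basis element of `HCK` given by a forest. -/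
noncomputable def bF (f : Forest I E) : HCK K I E := AddMonoidAlgebra.ofCoeff (Finsupp.single f 1)

/-- The basis element of `HCK` given by a single tree. -/
noncomputable def bT (c : TreeCl I E) : HCK K I E := bF K ({c} : Forest I E)

/-- The coefficient of a forest in an element of `HCK`. -/
noncomputable def coeF (h : HCK K I E) (f : Forest I E) : K := (h.coeff : Forest I E →₀ K) f

/-- The coproduct of the Connes–Kreimer Hopf algebra: on a basis forest `F` it is the sum
of `D ⊗ (F ∖ D)` over all downsets `D` of `F`. -/
noncomputable def comulCK : HCK K I E →ₗ[K] HCK K I E ⊗[K] HCK K I E :=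
  (Finsupp.lsum K fun f => LinearMap.toSpanSingleton K _
    (((cutsForest f).map fun p => bF K p.1 ⊗ₜ[K] bF K p.2).sum)) ∘ₗ
    (AddMonoidAlgebra.coeffLinearEquiv K).toLinearMap

open scoped Classical in
/-- The counit of the Connes–Kreimer Hopf algebra. -/
noncomputable def counitCK : HCK K I E →ₗ[K] K :=
  (Finsupp.lsum K fun f => LinearMap.toSpanSingleton K _ (if f = 0 then (1 : K) else 0)) ∘ₗ
    (AddMonoidAlgebra.coeffLinearEquiv K).toLinearMap

/-- The grafting operator `B₊^{(i)}` evaluated on a tuple of basis forests, extended to a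
function of tuples of arbitrary elements of `HCK` by multilinearity.  This realizes the
linear map `H^{⊗ E_i} → H` on the tensor power. -/
noncomputable def Bapp (i : I) [Fintype (E i)] (h : E i → HCK K I E) : HCK K I E :=
  ∑ᶠ fv : E i → Forest I E,
    (∏ e : E i, coeF K (h e) (fv e)) • bT K (graftF i fv)

/-- The grafting operator for a single insertion place, as a linear map. -/
noncomputable def Bop (i : I) [Fintype (E i)] : HCK K I E →ₗ[K] HCK K I E :=
  (Finsupp.lsum K fun f => LinearMap.toSpanSingleton K _ (bT K (graftF i (fun _ => f)))) ∘ₗ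
    (AddMonoidAlgebra.coeffLinearEquiv K).toLinearMap

end CK
namespace CK

open scoped TensorProduct
open PowerSeries

variable (K : Type) [Field K] [CharZero K]

/-- Falling factorial `u(u-1)⋯(u-m+1)` of a scalar. -/
def ffall (u : K) (m : ℕ) : K := ∏ k ∈ Finset.range m, (u - k)

/-- Generalized binomial coefficient `u(u-1)⋯(u-m+1)/m!`. -/
noncomputable def binomC (u : K) (m : ℕ) : K := ffall K u m / (Nat.factorial m : K)

variable {K}

/-- Vector falling factorial `μ^{\underline α} = ∏ⱼ μⱼ(μⱼ-1)⋯(μⱼ-αⱼ+1)`. -/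
def ffallVec {J : Type} [Fintype J] (μ : J → K) (α : J → ℕ) : K :=
  ∏ j : J, ffall K (μ j) (α j)

section BinomPow

variable {H : Type} [CommRing H] [Algebra K H]

/-- Binomial series power `F^u = Σ_m (u choose m) (F-1)^m` of a power series
(intended for `F` with constant term 1). -/
noncomputable def binomPow (u : K) (F : PowerSeries H) : PowerSeries H :=
  PowerSeries.mk fun n =>
    ∑ m ∈ Finset.range (n + 1), binomC K u m • (PowerSeries.coeff n ((F - 1) ^ m))

/-- Apply a linear map coefficientwise to a power series. -/
noncomputable def lapp {M N : Type} [Semiring M] [Semiring N] [Module K M] [Module K N]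
    (φ : M →ₗ[K] N) (S : PowerSeries M) : PowerSeries N :=
  PowerSeries.mk fun n => φ (PowerSeries.coeff n S)

end BinomPow

section PolyHopf

variable (K)

/-- The coproduct of the polynomial Hopf algebra `K[L]`, determined by
`Δ L = L ⊗ 1 + 1 ⊗ L`. -/
noncomputable def comulL : Polynomial K →ₐ[K] Polynomial K ⊗[K] Polynomial K :=
  Polynomial.aeval (Polynomial.X ⊗ₜ[K] 1 + 1 ⊗ₜ[K] Polynomial.X)

/-- The counit of the polynomial Hopf algebra `K[L]`, i.e. evaluation at `L = 0`. -/
noncomputable def counitL : Polynomial K →ₐ[K] K := Polynomial.aeval 0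

/-- A linear endomorphism of `K[L]` is a 1-cocycle if `Δ ∘ Λ = Λ ⊗ 1 + (id ⊗ Λ) ∘ Δ`. -/
def IsCocycleL (Λ : Polynomial K →ₗ[K] Polynomial K) : Prop :=
  ∀ f : Polynomial K,
    comulL K (Λ f) = Λ f ⊗ₜ[K] 1 + (TensorProduct.map LinearMap.id Λ) (comulL K f)

variable (σ : Type) [Fintype σ] [DecidableEq σ]

/-- The comodule structure (coaction) of `K[L]` on `K[L_e : e ∈ σ]`, the `σ`-fold tensor
power of `K[L]`; it is the algebra morphism determined by `L_e ↦ L ⊗ 1 + 1 ⊗ L_e`. -/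
noncomputable def coactMv :
    MvPolynomial σ K →ₐ[K] Polynomial K ⊗[K] MvPolynomial σ K :=
  MvPolynomial.aeval fun e => (Polynomial.X ⊗ₜ[K] 1 + 1 ⊗ₜ[K] MvPolynomial.X e)

/-- A linear map `K[L_e : e ∈ σ] → K[L]` is a 1-cocycle if
`Δ ∘ Λ = Λ ⊗ 1 + (id ⊗ Λ) ∘ δ` where `δ` is the coaction. -/
def IsCocycleMv (Λ : MvPolynomial σ K →ₗ[K] Polynomial K) : Prop :=
  ∀ f : MvPolynomial σ K,
    comulL K (Λ f) = Λ f ⊗ₜ[K] 1 + (TensorProduct.map LinearMap.id Λ) (coactMv K σ f)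

/-- The integro-differential operator
`f ↦ ∫₀^L A(∂/∂u_e : e ∈ σ) f |_{all u_e = u} du` associated with a formal power series
`A ∈ K[[L_e : e ∈ σ]]`. -/
noncomputable def intDiffOp (A : MvPowerSeries σ K) :
    MvPolynomial σ K →ₗ[K] Polynomial K :=
  (Finsupp.lsum K fun γ : σ →₀ ℕ => LinearMap.toSpanSingleton K _
    (∑ᶠ α : σ →₀ ℕ,
      (MvPowerSeries.coeff α A *
        (∏ e ∈ γ.support ∪ α.support, ((γ e).descFactorial (α e) : K)) *
        (((γ - α).sum fun _ n => n) + 1 : K)⁻¹) •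
      Polynomial.monomial (((γ - α).sum fun _ n => n) + 1) (1 : K))) ∘ₗ
    (AddMonoidAlgebra.coeffLinearEquiv K).toLinearMap

/-- Substitute `μ_e·L` for the variable `L_e` in a multivariate power series, obtaining a
single-variable power series. -/
noncomputable def diagSubst (μ : σ → K) (A : MvPowerSeries σ K) : PowerSeries K :=
  PowerSeries.mk fun n =>
    ∑ᶠ α : σ →₀ ℕ, (if (α.sum fun _ m => m) = n then
      MvPowerSeries.coeff α A * ∏ e : σ, (μ e) ^ (α e) else 0)

/-- The single-variable integro-differential operator `f ↦ ∫₀^L A(d/du) f(u) du`. -/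
noncomputable def intDiffOp1 (A : PowerSeries K) : Polynomial K →ₗ[K] Polynomial K :=
  LinearMap.comp (intDiffOp K Unit (fun α => PowerSeries.coeff (α ()) A))
    (MvPolynomial.pUnitAlgEquiv K).symm.toLinearMap

/-- `∂/∂L` applied coefficientwise to a power series (in `x`) with coefficients in `K[L]`. -/
noncomputable def dLs (G : PowerSeries (Polynomial K)) : PowerSeries (Polynomial K) :=
  PowerSeries.mk fun n => Polynomial.derivative (PowerSeries.coeff n G)

/-- `∂/∂x` of a power series in `x`. -/
noncomputable def dXs {R : Type} [CommRing R] (G : PowerSeries R) : PowerSeries R :=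
  PowerSeries.mk fun n => (n + 1 : ℕ) • PowerSeries.coeff (n + 1) G

/-- Embed a power series with coefficients in `K` into one with coefficients in `K[L]`. -/
noncomputable def liftC (b : PowerSeries K) : PowerSeries (Polynomial K) :=
  PowerSeries.map (Polynomial.C : K →+* Polynomial K) b

/-- The series of coefficients of `L` of a power series with coefficients in `K[L]`:
the anomalous dimension of a Green function. -/
noncomputable def linCoeffSeries (G : PowerSeries (Polynomial K)) : PowerSeries K :=
  PowerSeries.mk fun n => (PowerSeries.coeff n G).coeff 1

/-- The renormalization group equation `(∂/∂L − β(x)·∂/∂x − γ(x)) G(x,L) = 0`. -/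
def RGE (β γ : PowerSeries K) (G : PowerSeries (Polynomial K)) : Prop :=
  dLs K G = liftC K β * dXs G + liftC K γ * G

end PolyHopf

end CK
namespace CK

variable {I : Type} {E : I → Type}

/-! ### Tubings of rooted trees.

A tube of a rooted tree is a nonempty convex connected set of vertices; a binary tubing is
a maximal laminar family of tubes.  Recall that in our address representation the order of
the tree is: `u ≤ v` iff `v` is a prefix of `u` (the root `[]` is the maximum). -/

/-- A tube: a nonempty convex connected subset of the vertices of `t`.  Equivalently, a
nonempty subset `S` of the vertices having a root `r` (an element of which all elements
of `S` are descendants) such that for any `v ∈ S` all vertices between `r` and `v` belong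
to `S`. -/
def IsTube (t : PreTree I E) (S : Finset (List ℕ)) : Prop :=
  S.Nonempty ∧ S ⊆ t.supp ∧
    ∃ r ∈ S, (∀ v ∈ S, r <+: v) ∧
      (∀ v ∈ S, ∀ w : List ℕ, r <+: w → w <+: v → w ∈ S)

/-- A family of sets is laminar if any two members are nested or disjoint. -/
def Laminar (τ : Finset (Finset (List ℕ))) : Prop :=
  ∀ A ∈ τ, ∀ B ∈ τ, A ⊆ B ∨ B ⊆ A ∨ Disjoint A B

/-- A binary tubing of a rooted tree: a maximal laminar family of tubes. -/
def IsBinaryTubing (t : PreTree I E) (τ : Finset (Finset (List ℕ))) : Prop :=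
  (∀ S ∈ τ, IsTube t S) ∧ Laminar τ ∧
    ∀ τ' : Finset (Finset (List ℕ)),
      τ ⊆ τ' → (∀ S ∈ τ', IsTube t S) → Laminar τ' → τ' = τ

/-- The root of a tube: its unique element of minimal length. -/
noncomputable def tubeRoot (S : Finset (List ℕ)) : List ℕ :=
  (S.val.toList.argmin List.length).getD []

/-- The parent tube of `S` in the tubing `τ` of `t`: the intersection of all tubes of `τ`
strictly containing `S` (together with the vertex set of `t`). -/
noncomputable def parentTube (t : PreTree I E) (τ : Finset (Finset (List ℕ)))
    (S : Finset (List ℕ)) : Finset (List ℕ) :=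
  ((τ.filter fun T => S ⊂ T).val.toList).foldr (fun a b => a ∩ b) t.supp

/-- `S` is an upset of `T` (with respect to the tree order in which the root is maximal). -/
def IsUpsetIn (S T : Finset (List ℕ)) : Prop :=
  ∀ a ∈ S, ∀ b ∈ T, b <+: a → b ∈ S

/-- An upper tube of a binary tubing: a member of `τ` which is an upset in its parent
tube. -/
def IsUpperTube (t : PreTree I E) (τ : Finset (Finset (List ℕ)))
    (S : Finset (List ℕ)) : Prop :=
  S ∈ τ ∧ ∃ T ∈ τ, S ⊂ T ∧ (∀ U ∈ τ, S ⊂ U → T ⊆ U) ∧ IsUpsetIn S T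

/-- The lower tube corresponding to an upper tube `S`: the complement of `S` in its
parent tube. -/
noncomputable def lowerPartner (t : PreTree I E) (τ : Finset (Finset (List ℕ)))
    (S : Finset (List ℕ)) : Finset (List ℕ) :=
  parentTube t τ S \ S

open scoped Classical in
/-- The type of an upper tube `S`: the decoration of the first edge on the path from the
root of `S` to the root of the corresponding lower tube. -/
noncomputable def tubeType (t : PreTree I E) (τ : Finset (Finset (List ℕ)))
    (S : Finset (List ℕ)) : Option (Σ i : I, E i) :=
  t.edec ((tubeRoot (lowerPartner t τ S)).take ((tubeRoot S).length + 1))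

open scoped Classical in
/-- The rank vector of a vertex `v` in a tubing: for each edge type `e ∈ E_{d(v)}`, the
number of upper tubes of type `e` rooted at `v`. -/
noncomputable def rankVec (t : PreTree I E) (τ : Finset (Finset (List ℕ)))
    (v : List ℕ) : E (t.vdec v) → ℕ := fun e =>
  (τ.filter fun S => IsUpperTube t τ S ∧ tubeRoot S = v ∧
    tubeType t τ S = some ⟨t.vdec v, e⟩).card

open scoped Classical in
/-- The (untyped) rank of a vertex `v` in a tubing: the number of upper tubes rooted
at `v`. -/
noncomputable def rank (t : PreTree I E) (τ : Finset (Finset (List ℕ)))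
    (v : List ℕ) : ℕ :=
  (τ.filter fun S => IsUpperTube t τ S ∧ tubeRoot S = v).card

open scoped Classical in
/-- The statistic `b(τ)`: the number of tubes of `τ` containing the root of the tree. -/
noncomputable def bstat (τ : Finset (Finset (List ℕ))) : ℕ :=
  (τ.filter fun S => ([] : List ℕ) ∈ S).card

variable (K : Type) [Field K] [CharZero K]

/-- The Mellin monomial of a tubing `τ` with respect to a family of coefficients
`a_{i,α}`: the product over the non-root vertices `v` of `a_{d(v), rk(τ,v)}`. -/
noncomputable def mel (a : (i : I) → (E i → ℕ) → K) (t : PreTree I E)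
    (τ : Finset (Finset (List ℕ))) : K :=
  ∏ v ∈ t.supp.erase [], a (t.vdec v) (rankVec t τ v)

open scoped Classical in
/-- The `k`-th β-vector of a tubing: for each type `e`, the number of upper tubes of type
`e` containing the root, excluding the `k − 1` outermost upper tubes containing the
root. -/
noncomputable def betaVec (t : PreTree I E) (τ : Finset (Finset (List ℕ)))
    (k : ℕ) : E (t.vdec []) → ℕ := fun e =>
  (τ.filter fun S => IsUpperTube t τ S ∧ ([] : List ℕ) ∈ S ∧
    tubeType t τ S = some ⟨t.vdec [], e⟩ ∧
    k - 1 ≤ (τ.filter fun T => IsUpperTube t τ T ∧ ([] : List ℕ) ∈ T ∧ S ⊂ T).card).card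

/-- The contribution of all tubings of the tree `t` in the tubing expansion:
`Σ_{τ ∈ Tub(t)} mel(τ) Σ_{k=1}^{b(τ)} a_{d(t), β^k(τ)} L^k / k!`. -/
noncomputable def tubingPoly (a : (i : I) → (E i → ℕ) → K) (t : PreTree I E) :
    Polynomial K :=
  ∑ᶠ τ ∈ {τ : Finset (Finset (List ℕ)) | IsBinaryTubing t τ},
    mel K a t τ • ∑ k ∈ Finset.Icc 1 (bstat τ),
      a (t.vdec []) (betaVec t τ k) • Polynomial.monomial k (((Nat.factorial k : K))⁻¹)

/-- The linear-term coefficient of the tubing expansion: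
`σ(t) = Σ_{τ ∈ Tub(t)} a_{d(t), β¹(τ)} mel(τ)`. -/
noncomputable def tubingLin (a : (i : I) → (E i → ℕ) → K) (t : PreTree I E) : K :=
  ∑ᶠ τ ∈ {τ : Finset (Finset (List ℕ)) | IsBinaryTubing t τ},
    a (t.vdec []) (betaVec t τ 1) * mel K a t τ

end CK
namespace CK

open scoped TensorProduct

variable (K : Type) [Field K] [CharZero K]

/-! ### The Riordan Hopf algebra and the Faà di Bruno Hopf algebra.

`Rio` is the polynomial algebra `K[π₁, π₂, …, y₁, y₂, …]`; the variable `Sum.inl m`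
represents `π_{m+1}` and the variable `Sum.inr m` represents `y_{m+1}`. -/
abbrev Rio : Type := MvPolynomial (ℕ ⊕ ℕ) K

/-- The generator `π_n` (`n ≥ 1`) of `Rio`. -/
noncomputable def rioPi (n : ℕ) : Rio K := MvPolynomial.X (Sum.inl (n - 1))

/-- The generator `y_n` (`n ≥ 1`) of `Rio`. -/
noncomputable def rioY (n : ℕ) : Rio K := MvPolynomial.X (Sum.inr (n - 1))

/-- The series `Π(x) = x + Σ_{n≥1} π_n x^{n+1}`. -/
noncomputable def PiS : PowerSeries (Rio K) :=
  PowerSeries.mk fun n => if n = 0 then 0 else if n = 1 then 1 else rioPi K (n - 1)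

/-- The series `Y(x) = 1 + Σ_{n≥1} y_n x^n`. -/
noncomputable def YS : PowerSeries (Rio K) :=
  PowerSeries.mk fun n => if n = 0 then 1 else rioY K n

/-- `π_n` for `n ≥ 0` with the convention `π₀ = 1`. -/
noncomputable def rioPi' (n : ℕ) : Rio K := if n = 0 then 1 else rioPi K n

/-- `y_n` for `n ≥ 0` with the convention `y₀ = 1`. -/
noncomputable def rioY' (n : ℕ) : Rio K := if n = 0 then 1 else rioY K n

/-- The coproduct of the Riordan Hopf algebra, determined on the generators by
`Δ π_n = Σ_{k=0}^n ([x^{n+1}] Π(x)^{k+1}) ⊗ π_k` and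
`Δ y_n = Σ_{j=0}^n ([x^n] Y(x) Π(x)^j) ⊗ y_j`. -/
noncomputable def comulRio : Rio K →ₐ[K] Rio K ⊗[K] Rio K :=
  MvPolynomial.aeval fun v =>
    match v with
    | Sum.inl m =>
        ∑ k ∈ Finset.range (m + 2),
          (PowerSeries.coeff (m + 2) ((PiS K) ^ (k + 1))) ⊗ₜ[K] rioPi' K k
    | Sum.inr m =>
        ∑ j ∈ Finset.range (m + 2),
          (PowerSeries.coeff (m + 1) (YS K * (PiS K) ^ j)) ⊗ₜ[K] rioY' K j

/-- The counit of the Riordan Hopf algebra. -/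
noncomputable def counitRio : Rio K →ₐ[K] K := MvPolynomial.aeval fun _ => 0

/-- The subalgebra `FdB ⊂ Rio` generated by the `π`'s: a copy of the Faà di Bruno Hopf
algebra. -/
noncomputable def fdbInRio : Subalgebra K (Rio K) :=
  Algebra.adjoin K (Set.range fun m : ℕ => (MvPolynomial.X (Sum.inl m) : Rio K))

/-- The subalgebra `FdB^{(n)} ⊆ Rio` generated by `π₁, …, π_{n-1}`. -/
noncomputable def fdbN (n : ℕ) : Subalgebra K (Rio K) :=
  Algebra.adjoin K ((fun m : ℕ => (MvPolynomial.X (Sum.inl m) : Rio K)) ''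
    {m | m + 2 ≤ n})

/-- The subalgebra `Rio^{(n)} ⊆ Rio` generated by `π₁, …, π_{n-1}, y₁, …, y_n`. -/
noncomputable def rioN (n : ℕ) : Subalgebra K (Rio K) :=
  Algebra.adjoin K
    (((fun m : ℕ => (MvPolynomial.X (Sum.inl m) : Rio K)) '' {m | m + 2 ≤ n}) ∪
     ((fun m : ℕ => (MvPolynomial.X (Sum.inr m) : Rio K)) '' {m | m + 1 ≤ n}))

/-- `φ : Rio → A` is a bialgebra morphism when restricted to the subalgebra `S`
(with respect to a coproduct `Δ_A` and counit `ε_A` on `A`). -/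
def IsBialgHomOn {A : Type} [CommRing A] [Algebra K A]
    (ΔA : A →ₗ[K] A ⊗[K] A) (εA : A →ₗ[K] K) (φ : Rio K →ₐ[K] A)
    (S : Subalgebra K (Rio K)) : Prop :=
  ∀ z ∈ S, ΔA (φ z) = (TensorProduct.map φ.toLinearMap φ.toLinearMap) (comulRio K z) ∧
    εA (φ z) = counitRio K z

/-- The Faà di Bruno Hopf algebra `K[π₁, π₂, …]`; variable `m` represents `π_{m+1}`. -/
abbrev FdB : Type := MvPolynomial ℕ K

/-- The generator `π_n` (`n ≥ 1`) of `FdB`. -/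
noncomputable def fdbPi (n : ℕ) : FdB K := MvPolynomial.X (n - 1)

/-- `π_n` for `n ≥ 0` with the convention `π₀ = 1`. -/
noncomputable def fdbPi' (n : ℕ) : FdB K := if n = 0 then 1 else fdbPi K n

/-- The series `Π(x) = x + Σ_{n≥1} π_n x^{n+1}` of the Faà di Bruno Hopf algebra. -/
noncomputable def fdbPiS : PowerSeries (FdB K) :=
  PowerSeries.mk fun n => if n = 0 then 0 else if n = 1 then 1 else fdbPi K (n - 1)

/-- The coproduct of the Faà di Bruno Hopf algebra:
`Δ π_n = Σ_{k=0}^n ([x^{n+1}] Π(x)^{k+1}) ⊗ π_k`. -/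
noncomputable def comulFdB : FdB K →ₐ[K] FdB K ⊗[K] FdB K :=
  MvPolynomial.aeval fun m =>
    ∑ k ∈ Finset.range (m + 2),
      (PowerSeries.coeff (m + 2) ((fdbPiS K) ^ (k + 1))) ⊗ₜ[K] fdbPi' K k

/-- The counit of the Faà di Bruno Hopf algebra. -/
noncomputable def counitFdB : FdB K →ₐ[K] K := MvPolynomial.aeval fun _ => 0

end CK
namespace CK

open scoped TensorProduct

section TPow

variable (K : Type) [Field K] [CharZero K]
variable (E : Type) [Fintype E] [DecidableEq E]
variable (A : Type) [CommRing A] [Algebra K A]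

/-- The inclusion of the `e`-th factor `A → A^{⊗E}`. -/
noncomputable def tpowInclude (e : E) : A →ₗ[K] (⨂[K] _ : E, A) where
  toFun a := PiTensorProduct.tprod K (Function.update (fun _ => (1 : A)) e a)
  map_add' x y := by
    simpa using MultilinearMap.map_update_add (PiTensorProduct.tprod K)
      (fun _ => (1 : A)) e x y
  map_smul' c x := by
    simpa using MultilinearMap.map_update_smul (PiTensorProduct.tprod K)
      (fun _ => (1 : A)) e c x

/-- The canonical left coaction of a bialgebra `A` on its tensor power `A^{⊗E}`, obtained
by applying the coproduct to every factor and multiplying the left tensor legs. -/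
noncomputable def tpowCoaction (ΔA : A →ₗ[K] A ⊗[K] A) :
    (⨂[K] _ : E, A) →ₗ[K] A ⊗[K] (⨂[K] _ : E, A) :=
  (PiTensorProduct.lift
    ((MultilinearMap.mkPiAlgebra K E (A ⊗[K] (⨂[K] _ : E, A))).compLinearMap
      fun e => TensorProduct.map LinearMap.id (tpowInclude K E A e))) ∘ₗ
  (PiTensorProduct.map fun _ => ΔA)

/-- A multilinear map `Λ : A^{⊗E} → A` is a 1-cocycle if (the induced map on the tensor
power satisfies) `Δ ∘ Λ = Λ ⊗ 1 + (id ⊗ Λ) ∘ δ`. -/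
def IsCocycleTPow (ΔA : A →ₗ[K] A ⊗[K] A)
    (Λ : MultilinearMap K (fun _ : E => A) A) : Prop :=
  ∀ z : ⨂[K] _ : E, A,
    ΔA (PiTensorProduct.lift Λ z) =
      (PiTensorProduct.lift Λ z) ⊗ₜ[K] 1 +
      (TensorProduct.map LinearMap.id (PiTensorProduct.lift Λ)) (tpowCoaction K E A ΔA z)

end TPow

end CK
namespace CK

open scoped TensorProduct

/-- A 1-cocycle on a bialgebra `H`: `Δ ∘ Λ = Λ ⊗ 1 + (id ⊗ Λ) ∘ Δ`. -/
def IsCocycleBialg (K H : Type) [Field K] [CommRing H] [Bialgebra K H]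
    (Λ : H →ₗ[K] H) : Prop :=
  ∀ h : H, Coalgebra.comul (R := K) (Λ h) =
    (Λ h) ⊗ₜ[K] 1 +
    (TensorProduct.map LinearMap.id Λ) (Coalgebra.comul (R := K) h)

end CK

/-!
The entries `c(N, k) = [x^N] Y(x) Π(x)^k` of the Riordan array `(Y, Π)` behave like matrix
entries under the coproduct: `Δ c(N, k) = Σ_j c(N, j) ⊗ c(j, k)`. For `k = 0` this is the
defining formula for `Δ y_N`, and the step `k → k + 1` follows from the formula for `Δ π`.

The elements on which `φ` intertwines the coproducts and counits form a subalgebra, so it is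
enough to check the generators `y_N = c(N, 0)`, by induction on `N`. For `k ≥ 1`, `c(N, k)`
only involves `π_1, …, π_{N-1}` and `y_1, …, y_{N-1}`. Applying `Δ` to
`φ(y_N) = Σ_k Λ_k (φ c(N, k))`, the cocycle identity and the matrix formula turn the right-hand
side into `Σ_j φ c(N, j) ⊗ F_j`, which is `(φ ⊗ φ) Δ y_N`; and a 1-cocycle takes values in the
kernel of the counit.
-/

open scoped TensorProduct

lemma Finset.sum_range_eq_of_le {M : Type*} [AddCommMonoid M] {f : ℕ → M} {m N : ℕ}
    (hmN : m ≤ N) (hf : ∀ j, m ≤ j → f j = 0) :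
    ∑ j ∈ Finset.range m, f j = ∑ j ∈ Finset.range N, f j :=
  Finset.sum_subset (Finset.range_subset_range.mpr hmN) fun j _ hj =>
    hf j (by simpa using hj)

lemma finsum_pnat_eq_sum_range {M : Type*} [AddCommMonoid M] {f : ℕ+ → M} {N : ℕ}
    (hf : ∀ k : ℕ+, N < k → f k = 0) :
    ∑ᶠ k, f k = ∑ k ∈ Finset.range N, f k.succPNat := by
  rw [← finsum_comp_equiv Equiv.pnatEquivNat.symm]
  refine finsum_eq_sum_of_support_subset _ fun k hk => ?_
  by_contra hkN
  rw [Finset.mem_coe, Finset.mem_range, not_lt] at hkN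
  exact hk (hf _ (by rw [Equiv.pnatEquivNat_symm_apply, Nat.succPNat_coe]; omega))

open PowerSeries in
lemma PowerSeries.coeff_pow_mem {R : Type*} [CommSemiring R] (S : Subsemiring R)
    {f : PowerSeries R} {n : ℕ} (hf : ∀ i ≤ n, coeff i f ∈ S) (k : ℕ) :
    ∀ i ≤ n, coeff i (f ^ k) ∈ S := by
  induction k with
  | zero =>
    intro i _
    rw [pow_zero, coeff_one]
    split_ifs
    exacts [S.one_mem, S.zero_mem]
  | succ k ih =>
    intro i hi
    rw [pow_succ, coeff_mul]
    refine S.sum_mem fun p hp => S.mul_mem (ih _ ?_) (hf _ ?_) <;>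
      · rw [Finset.HasAntidiagonal.mem_antidiagonal] at hp; omega

namespace CK

open PowerSeries Finset

section Riordan

variable (K : Type) [Field K]

noncomputable def riordanEntry (N k : ℕ) : Rio K := coeff N (YS K * PiS K ^ k)

lemma coeff_PiS_zero : coeff 0 (PiS K) = 0 := by simp [PiS]

lemma coeff_PiS_pow_of_lt {N k : ℕ} (h : N < k) : coeff N (PiS K ^ k) = 0 := by
  have hX : (X : PowerSeries (Rio K)) ∣ PiS K := X_dvd_iff.mpr (by simp [PiS])
  obtain ⟨g, hg⟩ := pow_dvd_pow_of_dvd hX k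
  rw [hg, coeff_X_pow_mul', if_neg (by omega)]

lemma riordanEntry_of_lt {N k : ℕ} (h : N < k) : riordanEntry K N k = 0 := by
  rw [riordanEntry, coeff_mul]
  refine sum_eq_zero fun p hp => ?_
  rw [HasAntidiagonal.mem_antidiagonal] at hp
  rw [coeff_PiS_pow_of_lt K (by omega), mul_zero]

lemma riordanEntry_zero_right (N : ℕ) : riordanEntry K N 0 = rioY' K N := by
  simp [riordanEntry, YS, rioY']

lemma riordanEntry_add (N k l : ℕ) :
    riordanEntry K N (k + l) =
      ∑ i ∈ range (N + 1), riordanEntry K i k * coeff (N - i) (PiS K ^ l) := by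
  rw [riordanEntry, pow_add, ← mul_assoc, coeff_mul,
    Nat.sum_antidiagonal_eq_sum_range_succ
      (fun i j => coeff i (YS K * PiS K ^ k) * coeff j (PiS K ^ l))]
  rfl

lemma comulRio_coeff_PiS (M : ℕ) : comulRio K (coeff M (PiS K)) =
    ∑ l ∈ range (M + 1), coeff M (PiS K ^ l) ⊗ₜ[K] coeff l (PiS K) := by
  match M with
  | 0 => simp [PiS]
  | 1 => simp [PiS, sum_range_succ, Algebra.TensorProduct.one_def]
  | m + 2 =>
    have hπ : ∀ j, coeff (j + 1) (PiS K) = rioPi' K j := by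
      rintro (_ | j) <;> simp [PiS, rioPi', rioPi]
    rw [hπ, rioPi', if_neg (by omega), rioPi, comulRio, MvPolynomial.aeval_X,
      sum_range_succ' _ (m + 2), coeff_PiS_zero, TensorProduct.tmul_zero, add_zero]
    simp only [hπ, Nat.add_sub_cancel]

lemma comulRio_riordanEntry (k N : ℕ) :
    comulRio K (riordanEntry K N k) =
      ∑ j ∈ range (N + 1), riordanEntry K N j ⊗ₜ[K] riordanEntry K j k := by
  induction k generalizing N with
  | zero =>
    rcases N with _ | m
    · simp [riordanEntry_zero_right, rioY', Algebra.TensorProduct.one_def]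
    · rw [riordanEntry_zero_right, rioY', if_neg (by omega), rioY, comulRio,
        MvPolynomial.aeval_X]
      simp only [Nat.add_sub_cancel, riordanEntry_zero_right]
      rfl
  | succ k ih =>
    have hp : ∀ m, coeff m (PiS K ^ 1) = coeff m (PiS K) := by simp
    have expand : comulRio K (riordanEntry K N (k + 1)) = ∑ j ∈ range (N + 1),
        ∑ l ∈ range (N + 1), riordanEntry K N (j + l) ⊗ₜ[K]
          (riordanEntry K j k * coeff l (PiS K)) := by
      calc comulRio K (riordanEntry K N (k + 1))
          = ∑ i ∈ range (N + 1), ∑ j ∈ range (N + 1), ∑ l ∈ range (N + 1),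
              (riordanEntry K i j * coeff (N - i) (PiS K ^ l)) ⊗ₜ[K]
                (riordanEntry K j k * coeff l (PiS K)) := by
            rw [riordanEntry_add, map_sum]
            refine sum_congr rfl fun i hi => ?_
            rw [mem_range] at hi
            rw [map_mul, ih, hp, comulRio_coeff_PiS,
              sum_range_eq_of_le (m := i + 1) (N := N + 1) (by omega)
                fun j hj => by rw [riordanEntry_of_lt K (by omega), TensorProduct.zero_tmul],
              sum_range_eq_of_le (m := N - i + 1) (N := N + 1) (by omega)
                fun l hl => by rw [coeff_PiS_pow_of_lt K (by omega), TensorProduct.zero_tmul],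
              sum_mul_sum]
            simp only [Algebra.TensorProduct.tmul_mul_tmul]
        _ = _ := by
            rw [sum_comm]
            refine sum_congr rfl fun j _ => ?_
            rw [sum_comm]
            simp only [← TensorProduct.sum_tmul, ← riordanEntry_add]
    have diag : ∑ s ∈ range (N + 1), riordanEntry K N s ⊗ₜ[K] riordanEntry K s (k + 1) =
        ∑ j ∈ range (N + 1), ∑ l ∈ range (N + 1), riordanEntry K N (j + l) ⊗ₜ[K]
          (riordanEntry K j k * coeff l (PiS K)) := by
      calc ∑ s ∈ range (N + 1), riordanEntry K N s ⊗ₜ[K] riordanEntry K s (k + 1)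
          = ∑ s ∈ range (N + 1), ∑ j ∈ range (s + 1), riordanEntry K N (j + (s - j)) ⊗ₜ[K]
              (riordanEntry K j k * coeff (s - j) (PiS K)) := by
            refine sum_congr rfl fun s _ => ?_
            rw [riordanEntry_add, TensorProduct.tmul_sum]
            refine sum_congr rfl fun j hj => ?_
            rw [mem_range] at hj
            rw [hp, Nat.add_sub_cancel' (by omega)]
        _ = ∑ j ∈ range (N + 1), ∑ l ∈ range (N + 1 - j), riordanEntry K N (j + l) ⊗ₜ[K]
              (riordanEntry K j k * coeff l (PiS K)) :=
            sum_range_diag_flip (N + 1) fun j l => riordanEntry K N (j + l) ⊗ₜ[K]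
              (riordanEntry K j k * coeff l (PiS K))
        _ = _ := sum_congr rfl fun j _ => sum_range_eq_of_le (by omega)
              fun l hl => by rw [riordanEntry_of_lt K (by omega), TensorProduct.zero_tmul]
    rw [expand, diag]

end Riordan

section Generation

variable (K : Type) [Field K]

lemma coeff_PiS_mem_fdbN {n i : ℕ} (hi : i ≤ n) : coeff i (PiS K) ∈ fdbN K n := by
  match i with
  | 0 => simp [PiS]
  | 1 => simp [PiS]
  | m + 2 =>
    rw [show coeff (m + 2) (PiS K) = MvPolynomial.X (Sum.inl m) by simp [PiS, rioPi]]
    exact Algebra.subset_adjoin ⟨m, hi, rfl⟩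

lemma coeff_PiS_pow_mem_fdbN {n i : ℕ} (k : ℕ) (hi : i ≤ n) :
    coeff i (PiS K ^ k) ∈ fdbN K n :=
  coeff_pow_mem (fdbN K n).toSubsemiring (fun _ hj => coeff_PiS_mem_fdbN K hj) k i hi

lemma rioY'_mem_rioN {i N : ℕ} (hi : i ≤ N) : rioY' K i ∈ rioN K N := by
  rcases i with _ | m
  · simp [rioY']
  · rw [show rioY' K (m + 1) = MvPolynomial.X (Sum.inr m) by simp [rioY', rioY]]
    exact Algebra.subset_adjoin (Or.inr ⟨m, hi, rfl⟩)

lemma riordanEntry_succ_mem (N k : ℕ) :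
    riordanEntry K (N + 1) (k + 1) ∈ fdbN K (N + 1) ⊔ rioN K N := by
  rw [← zero_add (k + 1), riordanEntry_add, sum_range_succ, Nat.sub_self,
    coeff_PiS_pow_of_lt K (by omega), mul_zero, add_zero]
  refine Subalgebra.sum_mem _ fun i hi => Subalgebra.mul_mem _ ?_ ?_
  · rw [riordanEntry_zero_right]
    exact le_sup_right (a := fdbN K (N + 1)) (rioY'_mem_rioN K (by simpa using hi))
  · exact le_sup_left (b := rioN K N) (coeff_PiS_pow_mem_fdbN K _ (by omega))

end Generation

section Bialgebra

variable {K : Type} [Field K] {H : Type} [CommRing H] [Bialgebra K H]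

lemma IsCocycleBialg.counit_apply {Λ : H →ₗ[K] H} (hΛ : IsCocycleBialg K H Λ) (h : H) :
    Coalgebra.counit (R := K) (Λ h) = 0 := by
  let collapse : H ⊗[K] H →ₗ[K] H :=
    TensorProduct.lid K H ∘ₗ LinearMap.rTensor H (Coalgebra.counit (R := K))
  have hcollapse : ∀ x, collapse (Coalgebra.comul (R := K) x) = x := fun x => by
    simp [collapse, Coalgebra.rTensor_counit_comul]
  have hcomm : ∀ x, collapse (TensorProduct.map LinearMap.id Λ x) = Λ (collapse x) :=
    LinearMap.congr_fun (f := collapse ∘ₗ TensorProduct.map LinearMap.id Λ) (g := Λ ∘ₗ collapse)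
      (TensorProduct.ext' fun a b => by simp [collapse])
  have key := congrArg (Coalgebra.counit (R := K) ∘ collapse) (hΛ h)
  have hunit : collapse (Λ h ⊗ₜ[K] 1) = Coalgebra.counit (R := K) (Λ h) • 1 := by
    simp [collapse]
  simp only [Function.comp_apply] at key
  rw [map_add, hcomm, hcollapse, hcollapse, hunit, map_add, map_smul, Bialgebra.counit_one,
    smul_eq_mul, mul_one] at key
  exact left_eq_add.mp key

noncomputable def compatibleSubalgebra (φ : Rio K →ₐ[K] H) : Subalgebra K (Rio K) :=
  AlgHom.equalizer ((Bialgebra.comulAlgHom K H).comp φ)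
      ((Algebra.TensorProduct.map φ φ).comp (comulRio K)) ⊓
    AlgHom.equalizer ((Bialgebra.counitAlgHom K H).comp φ) (counitRio K)

lemma mem_compatibleSubalgebra {φ : Rio K →ₐ[K] H} {z : Rio K} :
    z ∈ compatibleSubalgebra φ ↔
      Coalgebra.comul (R := K) (φ z) = Algebra.TensorProduct.map φ φ (comulRio K z) ∧
        Coalgebra.counit (R := K) (φ z) = counitRio K z :=
  Iff.rfl

lemma isBialgHomOn_iff_le_compatibleSubalgebra {φ : Rio K →ₐ[K] H} {S : Subalgebra K (Rio K)} :
    IsBialgHomOn K (Coalgebra.comul (R := K)) (Coalgebra.counit (R := K)) φ S ↔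
      S ≤ compatibleSubalgebra φ :=
  Iff.rfl

variable {Λ : ℕ → H →ₗ[K] H} (φ : Rio K →ₐ[K] H)

lemma comul_map_riordanEntry_zero (hΛ : ∀ k, IsCocycleBialg K H (Λ k)) (N : ℕ)
    (hrec : ∀ j ≤ N, φ (riordanEntry K j 0) =
      (if j = 0 then 1 else 0) + ∑ k ∈ range N, Λ k (φ (riordanEntry K j (k + 1))))
    (hcompat : ∀ k, Coalgebra.comul (R := K) (φ (riordanEntry K N (k + 1))) =
      Algebra.TensorProduct.map φ φ (comulRio K (riordanEntry K N (k + 1)))) :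
    Coalgebra.comul (R := K) (φ (riordanEntry K N 0)) =
      Algebra.TensorProduct.map φ φ (comulRio K (riordanEntry K N 0)) := by
  have hΔ : ∀ k, Coalgebra.comul (R := K) (φ (riordanEntry K N (k + 1))) =
      ∑ j ∈ range (N + 1), φ (riordanEntry K N j) ⊗ₜ[K] φ (riordanEntry K j (k + 1)) := by
    intro k
    simp only [hcompat, comulRio_riordanEntry, map_sum, Algebra.TensorProduct.map_tmul]
  have hinner : ∀ j ∈ range (N + 1), ∑ k ∈ range N, Λ k (φ (riordanEntry K j (k + 1))) =
      φ (riordanEntry K j 0) - if j = 0 then 1 else 0 := fun j hj => by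
    rw [hrec j (Nat.lt_succ_iff.mp (mem_range.mp hj))]
    abel
  calc Coalgebra.comul (R := K) (φ (riordanEntry K N 0))
      = (if N = 0 then 1 else 0) ⊗ₜ[K] 1 +
          (∑ k ∈ range N, Λ k (φ (riordanEntry K N (k + 1)))) ⊗ₜ[K] 1 +
          ∑ j ∈ range (N + 1), φ (riordanEntry K N j) ⊗ₜ[K]
            ∑ k ∈ range N, Λ k (φ (riordanEntry K j (k + 1))) := by
        rw [hrec N le_rfl, map_add, map_sum]
        simp only [hΛ _ _, hΔ, map_sum, sum_add_distrib, TensorProduct.map_tmul,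
          LinearMap.id_apply, TensorProduct.sum_tmul, TensorProduct.tmul_sum]
        rw [sum_comm (s := range N)]
        split_ifs <;> simp [Algebra.TensorProduct.one_def, add_assoc]
    _ = φ (riordanEntry K N 0) ⊗ₜ[K] 1 + ∑ j ∈ range (N + 1), φ (riordanEntry K N j) ⊗ₜ[K]
          (φ (riordanEntry K j 0) - if j = 0 then 1 else 0) := by
        rw [sum_congr rfl fun j hj => congrArg (φ (riordanEntry K N j) ⊗ₜ[K] ·) (hinner j hj),
          ← TensorProduct.add_tmul, ← hrec N le_rfl]
    _ = ∑ j ∈ range (N + 1), φ (riordanEntry K N j) ⊗ₜ[K] φ (riordanEntry K j 0) := by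
        simp only [TensorProduct.tmul_sub, sum_sub_distrib, TensorProduct.tmul_ite,
          sum_ite_eq', mem_range, Nat.zero_lt_succ, if_true]
        abel
    _ = Algebra.TensorProduct.map φ φ (comulRio K (riordanEntry K N 0)) := by
        simp only [comulRio_riordanEntry, map_sum, Algebra.TensorProduct.map_tmul]

lemma rioN_le_compatibleSubalgebra (hΛ : ∀ k, IsCocycleBialg K H (Λ k))
    (hrec : ∀ N M, N ≤ M → φ (riordanEntry K N 0) =
      (if N = 0 then 1 else 0) + ∑ k ∈ range M, Λ k (φ (riordanEntry K N (k + 1))))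
    {n : ℕ} (hfdb : fdbN K n ≤ compatibleSubalgebra φ) {N : ℕ} (hN : N ≤ n) :
    rioN K N ≤ compatibleSubalgebra φ := by
  induction N with
  | zero =>
    refine Algebra.adjoin_le ?_
    rintro _ (⟨m, hm, -⟩ | ⟨m, hm, -⟩) <;> simp at hm
  | succ N ih =>
    have hprev := ih (by omega)
    refine Algebra.adjoin_le ?_
    rintro _ (⟨m, hm, rfl⟩ | ⟨m, hm, rfl⟩)
    · refine hfdb (Algebra.subset_adjoin ⟨m, ?_, rfl⟩)
      simp only [Set.mem_ofPred_eq] at hm ⊢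
      omega
    obtain hmN | rfl : m < N ∨ N = m := by simp only [Set.mem_ofPred_eq] at hm; omega
    · exact hprev (Algebra.subset_adjoin (Or.inr ⟨m, hmN, rfl⟩))
    have hfdb' : fdbN K (N + 1) ≤ compatibleSubalgebra φ :=
      le_trans (Algebra.adjoin_mono (Set.image_mono fun m hm => by
        simp only [Set.mem_ofPred_eq] at hm ⊢; omega)) hfdb
    have hentries (k : ℕ) : riordanEntry K (N + 1) (k + 1) ∈ compatibleSubalgebra φ :=
      sup_le hfdb' hprev (riordanEntry_succ_mem K N k)
    have hy : (MvPolynomial.X (Sum.inr N) : Rio K) = riordanEntry K (N + 1) 0 := by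
      simp [riordanEntry_zero_right, rioY', rioY]
    show (MvPolynomial.X (Sum.inr N) : Rio K) ∈ compatibleSubalgebra φ
    rw [hy, mem_compatibleSubalgebra]
    refine ⟨comul_map_riordanEntry_zero φ hΛ (N + 1) (fun j hj => hrec j (N + 1) hj)
      fun k => (mem_compatibleSubalgebra.mp (hentries k)).1, ?_⟩
    rw [hrec (N + 1) (N + 1) le_rfl, if_neg N.succ_ne_zero, zero_add, map_sum,
      sum_eq_zero fun k _ => (hΛ k).counit_apply _, ← hy, counitRio, MvPolynomial.aeval_X]

end Bialgebra

section Recursion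

variable {K : Type} [Field K] {H : Type} [CommRing H] [Algebra K H]

lemma lapp_eq_map (φ : Rio K →ₐ[K] H) (S : PowerSeries (Rio K)) :
    lapp φ.toLinearMap S = PowerSeries.map (φ : Rio K →+* H) S := by
  ext N
  simp [lapp]

lemma coeff_mul_lapp_PiS_pow {φ : Rio K →ₐ[K] H} {F : PowerSeries H}
    (hY : lapp φ.toLinearMap (YS K) = F) (N k : ℕ) :
    coeff N (F * lapp φ.toLinearMap (PiS K) ^ k) = φ (riordanEntry K N k) := by
  rw [← hY, lapp_eq_map, lapp_eq_map, ← map_pow, ← map_mul, coeff_map, riordanEntry]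
  rfl

lemma map_riordanEntry_zero_eq_sum {φ : Rio K →ₐ[K] H} {F : PowerSeries H} {Λ : ℕ+ → H →ₗ[K] H}
    (hY : lapp φ.toLinearMap (YS K) = F)
    (hF : ∀ n : ℕ, coeff n F = (if n = 0 then 1 else 0) +
      ∑ᶠ k : ℕ+, Λ k (coeff n (F * (lapp φ.toLinearMap (PiS K)) ^ (k : ℕ))))
    {N M : ℕ} (hNM : N ≤ M) :
    φ (riordanEntry K N 0) = (if N = 0 then 1 else 0) +
      ∑ k ∈ range M, Λ k.succPNat (φ (riordanEntry K N (k + 1))) := by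
  rw [← coeff_mul_lapp_PiS_pow hY, pow_zero, mul_one, hF,
    finsum_pnat_eq_sum_range (N := M) fun k hk => by
      rw [coeff_mul_lapp_PiS_pow hY, riordanEntry_of_lt K (by omega), map_zero, map_zero]]
  simp only [coeff_mul_lapp_PiS_pow hY, Nat.succPNat_coe]

end Recursion

theorem statement_13_general (K : Type) [Field K]
    (H : Type) [CommRing H] [Bialgebra K H]
    (Λ : ℕ+ → (H →ₗ[K] H)) (hΛ : ∀ k, IsCocycleBialg K H (Λ k))
    (φ : Rio K →ₐ[K] H) (F : PowerSeries H)
    (hY : lapp φ.toLinearMap (YS K) = F)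
    (hF : ∀ n : ℕ, PowerSeries.coeff n F =
      (if n = 0 then 1 else 0) +
      ∑ᶠ k : ℕ+, Λ k (PowerSeries.coeff n
        (F * (lapp φ.toLinearMap (PiS K)) ^ (k : ℕ))))
    (n : ℕ)
    (hfdb : IsBialgHomOn K (Coalgebra.comul (R := K)) (Coalgebra.counit (R := K)) φ
      (fdbN K n)) :
    IsBialgHomOn K (Coalgebra.comul (R := K)) (Coalgebra.counit (R := K)) φ
      (rioN K n) := by
  rw [isBialgHomOn_iff_le_compatibleSubalgebra] at hfdb ⊢
  exact rioN_le_compatibleSubalgebra φ (fun k => hΛ k.succPNat)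
    (fun _ _ hNM => map_riordanEntry_zero_eq_sum hY hF hNM) hfdb le_rfl

/-- Let `H` be a bialgebra, `φ : Rio → H` an algebra morphism, and
`{Λ_k}_{k≥1}` a family of 1-cocycles on `H`.  Let `Φ(x) = φ(Π(x))` and suppose that
`φ(Y(x)) = F(x)`, where `F(x)` is the unique solution of
`F(x) = 1 + Σ_{k≥1} Λ_k(F(x)Φ(x)^k)`.  Then for every `n ≥ 0`, if `φ` is a bialgebra
morphism when restricted to `FdB^{(n)}`, it is also a bialgebra morphism when restricted
to `Rio^{(n)}`. -/
theorem statement_13 (K : Type) [Field K] [CharZero K]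
    (H : Type) [CommRing H] [Bialgebra K H]
    (Λ : ℕ+ → (H →ₗ[K] H)) (hΛ : ∀ k, IsCocycleBialg K H (Λ k))
    (φ : Rio K →ₐ[K] H) (F : PowerSeries H)
    (hY : lapp φ.toLinearMap (YS K) = F)
    (hF : ∀ n : ℕ, PowerSeries.coeff n F =
      (if n = 0 then 1 else 0) +
      ∑ᶠ k : ℕ+, Λ k (PowerSeries.coeff n
        (F * (lapp φ.toLinearMap (PiS K)) ^ (k : ℕ))))
    (n : ℕ)
    (hfdb : IsBialgHomOn K (Coalgebra.comul (R := K)) (Coalgebra.counit (R := K)) φ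
      (fdbN K n)) :
    IsBialgHomOn K (Coalgebra.comul (R := K)) (Coalgebra.counit (R := K)) φ
      (rioN K n) :=
  statement_13_general K H Λ hΛ φ F hY hF n hfdb

end CK
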